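/- Consider maps a: ℕ × (0,∞) → ℂ and b: (0,∞) → ℂ. Suppose that for every ε > 0 there exist a_{1,ε}, a_{2,ε}: ℕ × (0,∞) → ℂ with a = a_{1,ε} + a_{2,ε} such that: (1) there is T > 0 with |a_{1,ε}(j,t)| < ε for all t ∈ (0,T) and all j ∈ ℕ; (2) for all t ∈ (0,1] there is N with |a_{2,ε}(j,t)| < ε for all j ≥ N; (3) for all t > 0, liminf_{j→∞} |b(t) − a(j,t)| = 0. Then lim_{t↓0} b(t) = 0. -/

import Mathlib

/-!
Fix `ε` and a small `t`. Eventually in `j` both parts of `a j t` are small, so `‖a j t‖` is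
eventually at most `2ε`. Since `‖b t - a j t‖` is then eventually bounded, its liminf is a genuine
one, and being `0` it makes `b t` arbitrarily close to some such `a j t`; hence `‖b t‖ ≤ 2ε`.
-/

open Filter Set

theorem norm_le_of_liminf_norm_sub_eq_zero {ι E : Type*} [SeminormedAddCommGroup E]
    {l : Filter ι} [l.NeBot] {v : E} {u : ι → E} {C : ℝ}
    (hu : ∀ᶠ j in l, ‖u j‖ ≤ C) (hlim : liminf (fun j => ‖v - u j‖) l = 0) : ‖v‖ ≤ C := by
  -- Without this bound the liminf could be the junk value `0` of an unbounded set.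
  have hcobdd : l.IsCoboundedUnder (· ≥ ·) (fun j => ‖v - u j‖) :=
    IsCoboundedUnder.of_frequently_le (a := ‖v‖ + C) <| Eventually.frequently <|
      hu.mono fun j hj => (norm_sub_le v (u j)).trans (by linarith)
  refine le_of_forall_pos_lt_add fun δ hδ => ?_
  have hclose : ∃ᶠ j in l, ‖v - u j‖ < δ :=
    frequently_lt_of_liminf_lt hcobdd (hlim ▸ hδ)
  obtain ⟨j, hvj, huj⟩ := (hclose.and_eventually hu).exists
  calc ‖v‖ ≤ ‖v - u j‖ + ‖u j‖ := norm_le_norm_sub_add v (u j)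
    _ < C + δ := by linarith

theorem stmt_12 (a : ℕ → ℝ → ℂ) (b : ℝ → ℂ)
    (hsplit : ∀ ε > (0:ℝ), ∃ a₁ a₂ : ℕ → ℝ → ℂ,
      (∀ j : ℕ, ∀ t > (0:ℝ), a j t = a₁ j t + a₂ j t) ∧
      (∃ T > (0:ℝ), ∀ t ∈ Set.Ioo (0:ℝ) T, ∀ j : ℕ, ‖a₁ j t‖ < ε) ∧
      (∀ t ∈ Set.Ioc (0:ℝ) 1, ∃ N : ℕ, ∀ j ≥ N, ‖a₂ j t‖ < ε))
    (hliminf : ∀ t > (0:ℝ), Filter.liminf (fun j : ℕ => ‖b t - a j t‖) atTop = 0) :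
    Tendsto b (nhdsWithin 0 (Set.Ioi 0)) (nhds 0) := by
  refine Metric.tendsto_nhds.2 fun ε hε => ?_
  obtain ⟨a₁, a₂, hadd, ⟨T, hT, ha₁⟩, ha₂⟩ := hsplit (ε / 4) (by positivity)
  filter_upwards [Ioo_mem_nhdsGT (lt_min hT one_pos)] with t ⟨ht0, htT1⟩
  obtain ⟨N, hN⟩ := ha₂ t ⟨ht0, (htT1.trans_le (min_le_right T 1)).le⟩
  have ha : ∀ᶠ j in atTop, ‖a j t‖ ≤ ε / 2 := by
    filter_upwards [eventually_ge_atTop N] with j hj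
    have h₁ := ha₁ t ⟨ht0, htT1.trans_le (min_le_left T 1)⟩ j
    have h₂ := hN j hj
    calc ‖a j t‖ ≤ ‖a₁ j t‖ + ‖a₂ j t‖ := hadd j t ht0 ▸ norm_add_le _ _
      _ ≤ ε / 2 := by linarith
  rw [dist_zero_right]
  linarith [norm_le_of_liminf_norm_sub_eq_zero ha (hliminf t ht0)]
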